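/- Let X be a Haar system space. Then the Haar system (h_I)_{I∈D^+}, in the linear order where h_∅ comes first and then levels in the usual order, is a monotone Schauder basis of X. -/

import Mathlib

open MeasureTheory Filter Set
open scoped ENNReal

noncomputable section
open Classical

/-- The dyadic interval of level `n` and position `i`. -/
def dyI (n i : ℕ) : Set ℝ := Set.Ico ((i : ℝ) / 2 ^ n) ((i + 1 : ℝ) / 2 ^ n)

/-- The Haar function of the dyadic interval of level `n`, position `i`. -/
def haarFn (n i : ℕ) : ℝ → ℝ := fun x =>
  if x ∈ dyI (n + 1) (2 * i) then 1 else if x ∈ dyI (n + 1) (2 * i + 1) then -1 else 0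

/-- Indexing of `D⁺`: `none` is the "empty" index `∅`, `some (n, i)` a dyadic interval. -/
def haarP : Option (ℕ × ℕ) → ℝ → ℝ
  | none => (Set.Ico (0 : ℝ) 1).indicator 1
  | some (n, i) => haarFn n i

/-- The interval supporting a given index of `D⁺` (with the convention that `∅` is
supported on `[0,1)`). -/
def suppI : Option (ℕ × ℕ) → Set ℝ
  | none => Set.Ico (0 : ℝ) 1
  | some p => dyI p.1 p.2

def lenI : Option (ℕ × ℕ) → ℝ
  | none => 1
  | some (n, _i) => 1 / 2 ^ n

def validIdx : Option (ℕ × ℕ) → Prop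
  | none => True
  | some (n, i) => i < 2 ^ n

/-- The position of the `k`-th member of a branch determined by signs `θ`
(`θ k = true` means the branch turns to the left half at step `k`). -/
def branchPos (θ : ℕ → Bool) : ℕ → ℕ
  | 0 => 0
  | 1 => 0
  | k + 2 => 2 * branchPos θ (k + 1) + (if θ (k + 1) then 0 else 1)

/-- The `k`-th member `I_k` of the branch determined by `θ`, as an index in `D⁺`. -/
def branchI (θ : ℕ → Bool) (k : ℕ) : Option (ℕ × ℕ) :=
  if k = 0 then none else some (k - 1, branchPos θ k)

/-- The sign `θ_k`, with the convention `θ_0 = 1`. -/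
def branchSgn (θ : ℕ → Bool) (k : ℕ) : ℝ :=
  if k = 0 then 1 else if θ k then 1 else -1

/-- The weight `|I_k|⁻¹`, with the convention `|I_0|⁻¹ = |∅|⁻¹ = 1`. -/
def branchWt (k : ℕ) : ℝ := if k = 0 then 1 else 2 ^ (k - 1)

/-- `B_k = I_k \ I_{k+1}`. -/
def branchB (θ : ℕ → Bool) (k : ℕ) : Set ℝ := suppI (branchI θ k) \ suppI (branchI θ (k + 1))


/-- Lebesgue measure restricted to `[0,1)`. -/
def mu01 : Measure ℝ := volume.restrict (Set.Ico 0 1)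

lemma mu01_ne_top (s : Set ℝ) : mu01 s ≠ ⊤ := by
  refine ne_top_of_le_ne_top ?_ (measure_mono (Set.subset_univ s))
  have : mu01 Set.univ = volume (Set.Ico (0:ℝ) 1) := by
    simp [mu01]
  rw [this, Real.volume_Ico]
  exact ENNReal.ofReal_ne_top

/-- indicator of a measurable set, as an element of `L₁[0,1)`. -/
def indL1 (s : Set ℝ) (hs : MeasurableSet s) : Lp ℝ 1 mu01 :=
  indicatorConstLp 1 hs (mu01_ne_top s) (1 : ℝ)

/-- The Haar system as elements of `L₁[0,1)`, indexed by `D⁺`. -/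
def haarL1 : Option (ℕ × ℕ) → Lp ℝ 1 mu01
  | none => indL1 (Set.Ico (0 : ℝ) 1) measurableSet_Ico
  | some (n, i) => indL1 (dyI (n + 1) (2 * i)) measurableSet_Ico
      - indL1 (dyI (n + 1) (2 * i + 1)) measurableSet_Ico

section Tensor

variable {X : Type*} [NormedAddCommGroup X] [NormedSpace ℝ X]

/-- the elementary tensor `f ⊗ x` as an element of the Bochner space `L₁([0,1); X)`. -/
def tensorL1 (f : Lp ℝ 1 mu01) (x : X) : Lp X 1 mu01 :=
  ((L1.integrable_coeFn f).smul_const x).toL1 _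

/-- For an operator `T` on `L₁(X)`, a functional `g ∈ X*` and a vector `x ∈ X`, the operator
`T^{(g,x)} : L₁ → L₁` defined by `⟨e*, T^{(g,x)} e⟩ = ⟨e* ⊗ g, T (e ⊗ x)⟩`; concretely
`T^{(g,x)} e = (s ↦ g ((T (e ⊗ x)) s))`. -/
def entryFun (T : Lp X 1 mu01 →L[ℝ] Lp X 1 mu01) (g : X →L[ℝ] ℝ) (x : X)
    (f : Lp ℝ 1 mu01) : Lp ℝ 1 mu01 :=
  (g.integrable_comp (L1.integrable_coeFn (T (tensorL1 f x)))).toL1 _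

end Tensor

/-- the linear span `Z` of the indicators of dyadic intervals. -/
def dyadicSpan : Submodule ℝ (ℝ → ℝ) :=
  Submodule.span ℝ {f | ∃ n i, i < 2 ^ n ∧ f = (dyI n i).indicator 1}

/-- A Haar system space norm: a norm on the span `Z` of the dyadic indicators which is
invariant under equidistribution and gives `χ_{[0,1)}` norm one.  The corresponding Haar
system space is the completion of `Z` under this norm. -/
structure HaarSystemNorm where
  N : (ℝ → ℝ) → ℝ
  nonneg : ∀ f, 0 ≤ N f
  add_le : ∀ f g, f ∈ dyadicSpan → g ∈ dyadicSpan → N (f + g) ≤ N f + N g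
  smul_eq : ∀ (c : ℝ) f, f ∈ dyadicSpan → N (c • f) = |c| * N f
  eq_zero : ∀ f, f ∈ dyadicSpan → N f = 0 → f = 0
  distrib_inv : ∀ f g, f ∈ dyadicSpan → g ∈ dyadicSpan →
    (∀ t : ℝ, volume {x | t < |f x|} = volume {x | t < |g x|}) → N f = N g
  norm_one : N ((Set.Ico (0 : ℝ) 1).indicator 1) = 1

/-- A realization of the Haar system space determined by a Haar system norm:
a Banach space `X` together with a linear embedding `j` of the span of the dyadic
indicators, which is isometric on the span and has dense range. -/
structure HaarSystemSpace (X : Type*) [NormedAddCommGroup X] [NormedSpace ℝ X] where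
  hn : HaarSystemNorm
  j : (ℝ → ℝ) →ₗ[ℝ] X
  norm_j : ∀ f ∈ dyadicSpan, ‖j f‖ = hn.N f
  dense_j : DenseRange (fun f : dyadicSpan => j f)

/-- the `X`-normalized Haar system `μ_L h_L` in a Haar system space. -/
def HaarSystemSpace.e {X : Type*} [NormedAddCommGroup X] [NormedSpace ℝ X]
    (H : HaarSystemSpace X) (L : Option (ℕ × ℕ)) : X :=
  ‖H.j ((suppI L).indicator 1)‖⁻¹ • H.j (haarP L)

section Factors

variable {X : Type*} [NormedAddCommGroup X] [NormedSpace ℝ X]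

/-- `T` is a `C`-factor of `S` with error `ε`. -/
def IsFactor (C ε : ℝ) (T S : X →L[ℝ] X) : Prop :=
  ∃ A B : X →L[ℝ] X, ‖B.comp (T.comp A) - S‖ ≤ ε ∧ ‖A‖ * ‖B‖ ≤ C

/-- `T` is a `C`-projectional factor of `S` with error `ε`: here `A : X → Y ⊆ X` is the
isomorphism onto a complemented subspace and `B = A⁻¹P` where `P` is the projection,
so that `B ∘ A = Id`. -/
def IsProjFactor (C ε : ℝ) (T S : X →L[ℝ] X) : Prop :=
  ∃ A B : X →L[ℝ] X, B.comp A = ContinuousLinearMap.id ℝ X ∧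
    ‖B.comp (T.comp A) - S‖ ≤ ε ∧ ‖A‖ * ‖B‖ ≤ C

end Factors

/-- the `n`-th Rademacher function `r_n = ∑_{L ∈ D_n} h_L`. -/
def rademacherFn (n : ℕ) : ℝ → ℝ := fun x => ∑ i ∈ Finset.range (2 ^ n), haarFn n i x

/-- Enumeration of the Haar system in the usual linear order `ι`
(`haarEnum 1 = h_∅`, `haarEnum 2 = h_{[0,1)}`, then level by level). -/
def haarEnum : ℕ → ℝ → ℝ := fun m =>
  if m ≤ 1 then (Set.Ico (0 : ℝ) 1).indicator 1
  else haarFn (Nat.log 2 (m - 1)) (m - 2 ^ Nat.log 2 (m - 1) - 1)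

/-- extraction of binary digits: `digitsFn x k` records whether the `k`-th digit of `x`
is `0`, i.e. whether the branch through `x` turns left at step `k`. -/
def digitsFn (x : ℝ) : ℕ → Bool := fun k => decide (⌊x * 2 ^ k⌋ % 2 = 0)

/-- the coin-tossing measure on the space of branches `[D⁺] ≃ {-1,1}^ℕ`, realized as the
image of Lebesgue measure on `[0,1)` under the binary-digit identification. -/
def muBr : Measure (ℕ → Bool) := Measure.map digitsFn mu01

/-- `h_Γ^θ = ∑_{J ∈ Γ} θ_J h_J` for a finite collection `Γ` of dyadic intervals. -/
def hGamma (Γ : Finset (ℕ × ℕ)) (θ : ℕ × ℕ → Bool) : ℝ → ℝ :=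
  fun x => ∑ J ∈ Γ, (if θ J then (1:ℝ) else -1) * haarFn J.1 J.2 x

/-- `Γ* = ∪ {I : I ∈ Γ}`. -/
def GammaStar (Γ : Finset (ℕ × ℕ)) : Set ℝ := ⋃ J ∈ Γ, dyI J.1 J.2

/-- `|Γ*|`, the total length of a disjoint finite collection of dyadic intervals. -/
def lenGamma (Γ : Finset (ℕ × ℕ)) : ℝ := ∑ J ∈ Γ, (1 : ℝ) / 2 ^ J.1

/-!
Write `S_k = ∑_{m ≤ k} c_m h_m`. Each `h_m` with `m ≤ k` is constant on the support `I` of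
`h_{k+1}`, hence so is `S_k`. Exchanging the two halves of `I` preserves Lebesgue measure and maps
`S_{k+1} = S_k + c_{k+1} h_{k+1}` to `S_k - c_{k+1} h_{k+1}`; these two functions are therefore
equimeasurable and have the same norm, and their average is `S_k`, so `‖S_k‖ ≤ ‖S_{k+1}‖`.
The same constancy shows that `S_{k+1} = 0` forces `c_{k+1} = 0` and `S_k = 0`, which gives
linear independence.
-/

section Swap

variable {α β : Type*} [MeasurableSpace α] {μ : Measure α}

theorem measure_setOf_inter_eq_ite {s : Set α} {F : α → β} {a : β} (hF : ∀ x ∈ s, F x = a)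
    (p : β → Prop) : μ ({x | p (F x)} ∩ s) = if p a then μ s else 0 := by
  split_ifs with ha
  · rw [Set.inter_eq_right.2 fun x hx => by simpa [Set.mem_ofPred_eq, hF x hx] using ha]
  · exact measure_mono_null (t := ∅) (fun x hx => (ha (hF x hx.2 ▸ hx.1)).elim) measure_empty

theorem measure_eq_inter_add_inter_add_sdiff {L R : Set α} (hL : MeasurableSet L)
    (hR : MeasurableSet R) (hLR : Disjoint L R) (E : Set α) :
    μ E = μ (E ∩ L) + μ (E ∩ R) + μ ((E \ L) \ R) := by
  have hER : (E \ L) ∩ R = E ∩ R := by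
    ext x
    simp only [Set.mem_inter_iff, Set.mem_sdiff]
    exact ⟨fun h => ⟨h.1.1, h.2⟩, fun h => ⟨⟨h.1, hLR.notMem_of_mem_right h.2⟩, h.2⟩⟩
  rw [← measure_inter_add_sdiff E hL, ← measure_inter_add_sdiff (E \ L) hR, hER, add_assoc]

theorem measure_setOf_eq_of_swap {L R : Set α} (hL : MeasurableSet L) (hR : MeasurableSet R)
    (hLR : Disjoint L R) (hμ : μ L = μ R) {F G : α → β} {a b : β}
    (hFL : ∀ x ∈ L, F x = a) (hFR : ∀ x ∈ R, F x = b)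
    (hGL : ∀ x ∈ L, G x = b) (hGR : ∀ x ∈ R, G x = a)
    (hFG : ∀ x, x ∉ L → x ∉ R → F x = G x) (p : β → Prop) :
    μ {x | p (F x)} = μ {x | p (G x)} := by
  have hdiff : ({x | p (F x)} \ L) \ R = ({x | p (G x)} \ L) \ R := by
    ext x
    simp only [Set.mem_sdiff, Set.mem_ofPred_eq]
    constructor
    · rintro ⟨⟨h, hxL⟩, hxR⟩; exact ⟨⟨hFG x hxL hxR ▸ h, hxL⟩, hxR⟩
    · rintro ⟨⟨h, hxL⟩, hxR⟩; exact ⟨⟨(hFG x hxL hxR).symm ▸ h, hxL⟩, hxR⟩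
  rw [measure_eq_inter_add_inter_add_sdiff hL hR hLR {x | p (F x)},
    measure_eq_inter_add_inter_add_sdiff hL hR hLR {x | p (G x)},
    measure_setOf_inter_eq_ite hFL, measure_setOf_inter_eq_ite hFR,
    measure_setOf_inter_eq_ite hGL, measure_setOf_inter_eq_ite hGR, hdiff, hμ, add_comm
    (ite _ _ _)]

end Swap

section Dyadic

theorem mem_dyI_iff_floor {n i : ℕ} {x : ℝ} : x ∈ dyI n i ↔ ⌊x * 2 ^ n⌋ = i := by
  have h2n : (0 : ℝ) < 2 ^ n := by positivity
  rw [dyI, Set.mem_Ico, div_le_iff₀ h2n, lt_div_iff₀ h2n, Int.floor_eq_iff]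
  push_cast
  rfl

theorem floor_mul_two_pow_of_le {m n : ℕ} (h : m ≤ n) (x : ℝ) :
    ⌊x * 2 ^ m⌋ = ⌊x * 2 ^ n⌋ / (2 ^ (n - m) : ℕ) := by
  rw [← Int.floor_div_natCast]
  congr 1
  rw [mul_div_assoc, ← Nat.add_sub_cancel' h, pow_add]
  push_cast
  rw [Nat.add_sub_cancel_left]
  field_simp

theorem mem_dyI_congr {m n i j : ℕ} (h : m ≤ n) {x y : ℝ} (hx : x ∈ dyI n i)
    (hy : y ∈ dyI n i) : x ∈ dyI m j ↔ y ∈ dyI m j := by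
  rw [mem_dyI_iff_floor] at hx hy ⊢
  rw [mem_dyI_iff_floor, floor_mul_two_pow_of_le h x, floor_mul_two_pow_of_le h y, hx, hy]

theorem eq_of_mem_dyI {n i j : ℕ} {x : ℝ} (hi : x ∈ dyI n i) (hj : x ∈ dyI n j) : i = j := by
  rw [mem_dyI_iff_floor] at hi hj
  exact_mod_cast hi.symm.trans hj

theorem dyI_succ_subset (n j : ℕ) : dyI (n + 1) j ⊆ dyI n (j / 2) := by
  intro x hx
  rw [mem_dyI_iff_floor] at hx ⊢
  rw [floor_mul_two_pow_of_le (Nat.le_succ n), hx]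
  push_cast
  simp

theorem left_mem_dyI (n i : ℕ) : (i : ℝ) / 2 ^ n ∈ dyI n i :=
  Set.left_mem_Ico.2 (by gcongr; linarith)

theorem volume_dyI (n i : ℕ) : volume (dyI n i) = ENNReal.ofReal (1 / 2 ^ n) := by
  rw [dyI, Real.volume_Ico]
  congr 1
  ring

end Dyadic

section HaarFunction

theorem disjoint_dyI_halves (n i : ℕ) : Disjoint (dyI (n + 1) (2 * i)) (dyI (n + 1) (2 * i + 1)) :=
  Set.disjoint_left.2 fun _ hL hR => by have := eq_of_mem_dyI hL hR; omega

theorem dyI_left_half_subset (n i : ℕ) : dyI (n + 1) (2 * i) ⊆ dyI n i := by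
  simpa using dyI_succ_subset n (2 * i)

theorem dyI_right_half_subset (n i : ℕ) : dyI (n + 1) (2 * i + 1) ⊆ dyI n i := by
  simpa [Nat.mul_add_div] using dyI_succ_subset n (2 * i + 1)

theorem haarFn_of_mem_left {n i : ℕ} {x : ℝ} (hx : x ∈ dyI (n + 1) (2 * i)) : haarFn n i x = 1 :=
  if_pos hx

theorem haarFn_of_mem_right {n i : ℕ} {x : ℝ} (hx : x ∈ dyI (n + 1) (2 * i + 1)) :
    haarFn n i x = -1 := by
  rw [haarFn, if_neg ((disjoint_dyI_halves n i).notMem_of_mem_right hx), if_pos hx]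

theorem haarFn_of_notMem {n i : ℕ} {x : ℝ} (hL : x ∉ dyI (n + 1) (2 * i))
    (hR : x ∉ dyI (n + 1) (2 * i + 1)) : haarFn n i x = 0 := by
  rw [haarFn, if_neg hL, if_neg hR]

theorem haarFn_eq_zero_of_mem_dyI {n i j : ℕ} {x : ℝ} (hx : x ∈ dyI n j) (hij : i ≠ j) :
    haarFn n i x = 0 :=
  haarFn_of_notMem (fun h => hij (eq_of_mem_dyI (dyI_left_half_subset n i h) hx))
    (fun h => hij (eq_of_mem_dyI (dyI_right_half_subset n i h) hx))

theorem haarFn_congr_of_lt {m n i j : ℕ} (h : m < n) {x y : ℝ} (hx : x ∈ dyI n i)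
    (hy : y ∈ dyI n i) : haarFn m j x = haarFn m j y := by
  rw [haarFn, haarFn, mem_dyI_congr h hx hy, mem_dyI_congr h hx hy]

theorem volume_lt_abs_add_smul_haarFn {n i : ℕ} {g : ℝ → ℝ} {a : ℝ}
    (hg : ∀ x ∈ dyI n i, g x = a) (s t : ℝ) :
    volume {x | t < |(g + s • haarFn n i) x|} = volume {x | t < |(g - s • haarFn n i) x|} := by
  have hL x (hx : x ∈ dyI (n + 1) (2 * i)) : g x = a := hg x (dyI_left_half_subset n i hx)
  have hR x (hx : x ∈ dyI (n + 1) (2 * i + 1)) : g x = a := hg x (dyI_right_half_subset n i hx)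
  refine measure_setOf_eq_of_swap (L := dyI (n + 1) (2 * i)) (R := dyI (n + 1) (2 * i + 1))
    measurableSet_Ico measurableSet_Ico (disjoint_dyI_halves n i)
    (by rw [volume_dyI, volume_dyI]) (a := a + s) (b := a - s) ?_ ?_ ?_ ?_ ?_ (fun v => t < |v|)
  all_goals intro x
  · intro hx; simp [hL x hx, haarFn_of_mem_left hx]
  · intro hx; simp [hR x hx, haarFn_of_mem_right hx, sub_eq_add_neg]
  · intro hx; simp [hL x hx, haarFn_of_mem_left hx, sub_eq_add_neg]
  · intro hx; simp [hR x hx, haarFn_of_mem_right hx]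
  · intro hxL hxR; simp [haarFn_of_notMem hxL hxR]

end HaarFunction

section Enumeration

/-- `(level, position)` of the dyadic interval carrying `haarEnum m`; meaningful for `2 ≤ m`. -/
def haarIndex (m : ℕ) : ℕ × ℕ := (Nat.log 2 (m - 1), m - 2 ^ Nat.log 2 (m - 1) - 1)

theorem haarEnum_of_two_le {m : ℕ} (hm : 2 ≤ m) :
    haarEnum m = haarFn (haarIndex m).1 (haarIndex m).2 :=
  if_neg (by omega)

theorem haarEnum_of_le_one {m : ℕ} (hm : m ≤ 1) : haarEnum m = (dyI 0 0).indicator 1 := by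
  rw [haarEnum, if_pos hm]
  norm_num [dyI]

theorem haarIndex_snd_lt {m : ℕ} (hm : 2 ≤ m) : (haarIndex m).2 < 2 ^ (haarIndex m).1 := by
  have hlow := Nat.pow_log_le_self 2 (by omega : m - 1 ≠ 0)
  have hhigh := Nat.lt_pow_succ_log_self (by norm_num : 1 < 2) (m - 1)
  rw [pow_succ] at hhigh
  simp only [haarIndex]
  omega

theorem haarIndex_lt_of_lt {p m : ℕ} (hp : 2 ≤ p) (hpm : p < m) :
    (haarIndex p).1 < (haarIndex m).1 ∨
      (haarIndex p).1 = (haarIndex m).1 ∧ (haarIndex p).2 < (haarIndex m).2 := by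
  rcases (Nat.log_mono_right (b := 2) (by omega : p - 1 ≤ m - 1)).lt_or_eq with hlt | heq
  · exact Or.inl hlt
  · have hlow := Nat.pow_log_le_self 2 (by omega : p - 1 ≠ 0)
    simp only [haarIndex] at heq ⊢
    rw [heq] at hlow ⊢
    omega

theorem haarEnum_congr_of_lt {p m : ℕ} (hpm : p < m) {x y : ℝ}
    (hx : x ∈ dyI (haarIndex m).1 (haarIndex m).2) (hy : y ∈ dyI (haarIndex m).1 (haarIndex m).2) :
    haarEnum p x = haarEnum p y := by
  rcases le_or_gt p 1 with hp | hp
  · simp only [haarEnum_of_le_one hp, Set.indicator_apply, Pi.one_apply,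
      mem_dyI_congr (Nat.zero_le _) hx hy]
  rw [haarEnum_of_two_le hp]
  rcases haarIndex_lt_of_lt hp hpm with hlt | ⟨heq, hlt⟩
  · exact haarFn_congr_of_lt hlt hx hy
  · rw [heq, haarFn_eq_zero_of_mem_dyI hx hlt.ne, haarFn_eq_zero_of_mem_dyI hy hlt.ne]

theorem exists_haarEnum_eq_one (m : ℕ) : ∃ x, haarEnum m x = 1 := by
  rcases le_or_gt m 1 with hm | hm
  · exact ⟨_, by rw [haarEnum_of_le_one hm, Set.indicator_of_mem (left_mem_dyI 0 0), Pi.one_apply]⟩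
  · exact ⟨_, by rw [haarEnum_of_two_le hm]; exact haarFn_of_mem_left (left_mem_dyI _ _)⟩

theorem indicator_dyI_mem_dyadicSpan {n i : ℕ} (hi : i < 2 ^ n) :
    (dyI n i).indicator 1 ∈ dyadicSpan :=
  Submodule.subset_span ⟨n, i, hi, rfl⟩

theorem haarFn_eq_indicator_sub_indicator (n i : ℕ) :
    haarFn n i = (dyI (n + 1) (2 * i)).indicator 1 - (dyI (n + 1) (2 * i + 1)).indicator 1 := by
  funext x
  by_cases hL : x ∈ dyI (n + 1) (2 * i)
  · simp [haarFn_of_mem_left hL, hL, (disjoint_dyI_halves n i).notMem_of_mem_left hL]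
  by_cases hR : x ∈ dyI (n + 1) (2 * i + 1)
  · simp [haarFn_of_mem_right hR, hL, hR]
  · simp [haarFn_of_notMem hL hR, hL, hR]

theorem haarFn_mem_dyadicSpan {n i : ℕ} (hi : i < 2 ^ n) : haarFn n i ∈ dyadicSpan := by
  rw [haarFn_eq_indicator_sub_indicator]
  exact sub_mem (indicator_dyI_mem_dyadicSpan (by rw [pow_succ]; omega))
    (indicator_dyI_mem_dyadicSpan (by rw [pow_succ]; omega))

theorem haarEnum_mem_dyadicSpan (m : ℕ) : haarEnum m ∈ dyadicSpan := by
  rcases le_or_gt m 1 with hm | hm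
  · rw [haarEnum_of_le_one hm]
    exact indicator_dyI_mem_dyadicSpan (by norm_num)
  · rw [haarEnum_of_two_le hm]
    exact haarFn_mem_dyadicSpan (haarIndex_snd_lt hm)

end Enumeration

section PartialSum

def haarPartialSum (c : ℕ → ℝ) (k : ℕ) : ℝ → ℝ := ∑ m ∈ Finset.Icc 1 k, c m • haarEnum m

theorem haarPartialSum_zero (c : ℕ → ℝ) : haarPartialSum c 0 = 0 := rfl

theorem haarPartialSum_succ (c : ℕ → ℝ) (k : ℕ) :
    haarPartialSum c (k + 1) = haarPartialSum c k + c (k + 1) • haarEnum (k + 1) :=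
  Finset.sum_Icc_succ_top (by omega) _

theorem haarPartialSum_mem_dyadicSpan (c : ℕ → ℝ) (k : ℕ) : haarPartialSum c k ∈ dyadicSpan :=
  Submodule.sum_mem _ fun m _ => Submodule.smul_mem _ _ (haarEnum_mem_dyadicSpan m)

theorem haarPartialSum_congr {c : ℕ → ℝ} {k : ℕ} {x y : ℝ}
    (hx : x ∈ dyI (haarIndex (k + 1)).1 (haarIndex (k + 1)).2)
    (hy : y ∈ dyI (haarIndex (k + 1)).1 (haarIndex (k + 1)).2) :
    haarPartialSum c k x = haarPartialSum c k y := by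
  simp only [haarPartialSum, Finset.sum_apply, Pi.smul_apply, smul_eq_mul]
  refine Finset.sum_congr rfl fun m hm => ?_
  have hm := Finset.mem_Icc.1 hm
  rw [haarEnum_congr_of_lt (by omega) hx hy]

/-- `S_k` is constant on the support of `h_{k+1}`, where `h_{k+1}` takes both values `1` and `-1`. -/
theorem coeff_succ_eq_zero_of_haarPartialSum_succ_eq_zero {c : ℕ → ℝ} {k : ℕ}
    (h : haarPartialSum c (k + 1) = 0) : c (k + 1) = 0 ∧ haarPartialSum c k = 0 := by
  rw [haarPartialSum_succ] at h
  suffices hc : c (k + 1) = 0 by simpa [hc] using h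
  rcases Nat.eq_zero_or_pos k with rfl | hk
  · obtain ⟨x, hx⟩ := exists_haarEnum_eq_one 1
    simpa [haarPartialSum_zero, hx] using congrFun h x
  set I := haarIndex (k + 1)
  set xL : ℝ := (2 * I.2 : ℕ) / 2 ^ (I.1 + 1)
  set xR : ℝ := (2 * I.2 + 1 : ℕ) / 2 ^ (I.1 + 1)
  have hL : xL ∈ dyI (I.1 + 1) (2 * I.2) := left_mem_dyI _ _
  have hR : xR ∈ dyI (I.1 + 1) (2 * I.2 + 1) := left_mem_dyI _ _
  have hconst := haarPartialSum_congr (c := c) (dyI_left_half_subset _ _ hL)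
    (dyI_right_half_subset _ _ hR)
  have hvalL := congrFun h xL
  have hvalR := congrFun h xR
  simp only [haarEnum_of_two_le (by omega : 2 ≤ k + 1), Pi.add_apply, Pi.smul_apply,
    smul_eq_mul, Pi.zero_apply] at hvalL hvalR
  rw [haarFn_of_mem_left hL] at hvalL
  rw [haarFn_of_mem_right hR] at hvalR
  linarith

theorem haarPartialSum_eq_zero_of_le {c : ℕ → ℝ} {k K : ℕ} (hK : haarPartialSum c K = 0)
    (hk : k ≤ K) : haarPartialSum c k = 0 := by
  induction hk using Nat.decreasingInduction with
  | self => exact hK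
  | of_succ j _ ih => exact (coeff_succ_eq_zero_of_haarPartialSum_succ_eq_zero ih).2

theorem coeff_eq_zero_of_haarPartialSum_eq_zero {c : ℕ → ℝ} {K : ℕ} (hK : haarPartialSum c K = 0)
    {m : ℕ} (hm : m ∈ Finset.Icc 1 K) : c m = 0 := by
  obtain ⟨hm1, hmK⟩ := Finset.mem_Icc.1 hm
  obtain ⟨k, rfl⟩ : ∃ k, m = k + 1 := ⟨m - 1, by omega⟩
  exact (coeff_succ_eq_zero_of_haarPartialSum_succ_eq_zero (haarPartialSum_eq_zero_of_le hK hmK)).1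

end PartialSum

namespace HaarSystemNorm

variable (H : HaarSystemNorm)

theorem N_zero : H.N 0 = 0 := by
  simpa using H.smul_eq 0 0 (Submodule.zero_mem _)

theorem N_le_N_add_of_equimeasurable {f h : ℝ → ℝ} (hf : f ∈ dyadicSpan) (hh : h ∈ dyadicSpan)
    (heq : ∀ t : ℝ, volume {x | t < |(f + h) x|} = volume {x | t < |(f - h) x|}) :
    H.N f ≤ H.N (f + h) := by
  have hadd := add_mem hf hh
  have hsub := sub_mem hf hh
  have hsymm : H.N (f - h) = H.N (f + h) := H.distrib_inv _ _ hsub hadd fun t => (heq t).symm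
  calc H.N f = |(1 / 2 : ℝ)| * H.N ((f + h) + (f - h)) := by
        rw [← H.smul_eq _ _ (add_mem hadd hsub)]
        congr 1
        module
    _ ≤ |(1 / 2 : ℝ)| * (H.N (f + h) + H.N (f - h)) := by
        gcongr
        exact H.add_le _ _ hadd hsub
    _ = H.N (f + h) := by
        rw [hsymm, abs_of_pos (by norm_num)]
        ring

theorem N_haarPartialSum_le_succ (c : ℕ → ℝ) (k : ℕ) :
    H.N (haarPartialSum c k) ≤ H.N (haarPartialSum c (k + 1)) := by
  rcases Nat.eq_zero_or_pos k with rfl | hk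
  · rw [haarPartialSum_zero, N_zero]
    exact H.nonneg _
  have hm : 2 ≤ k + 1 := by omega
  rw [haarPartialSum_succ, haarEnum_of_two_le hm]
  refine H.N_le_N_add_of_equimeasurable (haarPartialSum_mem_dyadicSpan c k)
    (Submodule.smul_mem _ _ (haarFn_mem_dyadicSpan (haarIndex_snd_lt hm))) fun t => ?_
  exact volume_lt_abs_add_smul_haarFn (fun x hx => haarPartialSum_congr hx (left_mem_dyI _ _)) _ t

theorem monotone_N_haarPartialSum (c : ℕ → ℝ) : Monotone fun k => H.N (haarPartialSum c k) :=
  monotone_nat_of_le_succ (H.N_haarPartialSum_le_succ c)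

end HaarSystemNorm

theorem statement13 (H : HaarSystemNorm) :
    (∀ (c : ℕ → ℝ) (K k : ℕ), k ≤ K →
      H.N (∑ m ∈ Finset.Icc 1 k, c m • haarEnum m) ≤
        H.N (∑ m ∈ Finset.Icc 1 K, c m • haarEnum m)) ∧
    ∀ (c : ℕ → ℝ) (K : ℕ), (∑ m ∈ Finset.Icc 1 K, c m • haarEnum m) = 0 →
      ∀ m ∈ Finset.Icc 1 K, c m = 0 :=
  ⟨fun c _ _ hkK => H.monotone_N_haarPartialSum c hkK,
    fun _ _ hK _ hm => coeff_eq_zero_of_haarPartialSum_eq_zero hK hm⟩
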